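/- arXiv:1903.07555 — 5 statements merged into one kernel-verified Lean document; each statement's English description precedes it below -/
import Mathlib

section
/- Let H be a Hilbert space, K a finite-dimensional subspace of H, and (R_N) a sequence of orthogonal projections in H converging pointwise to the identity (R_N z → z for all z ∈ H). Let S_N be the orthogonal projection onto R_N(K) and S the orthogonal projection onto K. Then S_N z → S z for every z ∈ H. -/
/-!
On the finite-dimensional space `K`, pointwise convergence `R N → id` is convergence in operator
norm, so `S_N z = R N (u N)` has a preimage `u N ∈ K` that stays bounded and becomes close to
`S_N z`. Since `R N (S z) ∈ R N (K)`, minimality of `S_N z` gives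
`‖z - u N‖ → ‖z - S z‖ = dist(z, K)`, and by Pythagoras such a minimizing sequence in `K`
converges to `S z`.
-/

open Filter Topology

section FiniteDimensional

variable {𝕜 E F α : Type*} [NontriviallyNormedField 𝕜] [CompleteSpace 𝕜]
  [NormedAddCommGroup E] [NormedSpace 𝕜 E] [FiniteDimensional 𝕜 E]
  [NormedAddCommGroup F] [NormedSpace 𝕜 F]

theorem tendsto_clm_apply {l : Filter α} {f : α → E →L[𝕜] F} {g : E →L[𝕜] F} :
    Tendsto f l (𝓝 g) ↔ ∀ y, Tendsto (fun a ↦ f a y) l (𝓝 (g y)) := by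
  refine ⟨fun h y ↦ ((ContinuousLinearMap.apply 𝕜 F y).continuous.tendsto g).comp h,
    fun h ↦ ?_⟩
  let v := Module.finBasis 𝕜 E
  have hv : Tendsto (fun a ↦ ∑ i, ‖(f a - g) (v i)‖) l (𝓝 0) := by
    simpa using tendsto_finsetSum _ fun i _ ↦ tendsto_iff_norm_sub_tendsto_zero.mp (h (v i))
  rw [tendsto_iff_norm_sub_tendsto_zero]
  refine squeeze_zero (fun _ ↦ norm_nonneg _) (fun a ↦ v.opNorm_le
    (Finset.sum_nonneg fun _ _ ↦ norm_nonneg _) fun i ↦ Finset.single_le_sum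
      (f := fun i ↦ ‖(f a - g) (v i)‖) (fun _ _ ↦ norm_nonneg _) (Finset.mem_univ i)) ?_
  simpa using hv.const_mul _

end FiniteDimensional

theorem ContinuousLinearMap.tendsto_apply_sub_of_tendsto_of_isometry
    {𝕜 E F α : Type*} [NontriviallyNormedField 𝕜]
    [NormedAddCommGroup E] [NormedSpace 𝕜 E] [NormedAddCommGroup F] [NormedSpace 𝕜 F]
    {l : Filter α} {f : α → E →L[𝕜] F} {g : E →L[𝕜] F} (hg : ∀ x, ‖g x‖ = ‖x‖)
    (hf : Tendsto f l (𝓝 g)) {x : α → E} {C : ℝ} (hC : ∀ a, ‖f a (x a)‖ ≤ C) :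
    Tendsto (fun a ↦ f a (x a) - g (x a)) l (𝓝 0) := by
  have hf' : Tendsto (fun a ↦ ‖f a - g‖) l (𝓝 0) := tendsto_iff_norm_sub_tendsto_zero.mp hf
  refine squeeze_zero_norm' ?_ (by simpa using hf'.mul_const (2 * C))
  filter_upwards [hf'.eventually (eventually_le_nhds one_half_pos)] with a ha
  have hx : ‖x a‖ ≤ 2 * C := by
    have : ‖x a‖ ≤ C + 1 / 2 * ‖x a‖ :=
      calc ‖x a‖ = ‖g (x a)‖ := (hg _).symm
        _ ≤ ‖f a (x a)‖ + ‖(f a - g) (x a)‖ := norm_le_norm_add_norm_sub _ _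
        _ ≤ C + ‖f a - g‖ * ‖x a‖ := add_le_add (hC a) ((f a - g).le_opNorm _)
        _ ≤ C + 1 / 2 * ‖x a‖ := by gcongr
    linarith
  calc ‖f a (x a) - g (x a)‖ = ‖(f a - g) (x a)‖ := rfl
    _ ≤ ‖f a - g‖ * ‖x a‖ := (f a - g).le_opNorm _
    _ ≤ ‖f a - g‖ * (2 * C) := by gcongr

namespace Submodule

variable {𝕜 E : Type*} [RCLike 𝕜] [NormedAddCommGroup E] [InnerProductSpace 𝕜 E]
  (K : Submodule 𝕜 E) [K.HasOrthogonalProjection]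

theorem norm_sub_sq_eq_of_mem (z : E) {w : E} (hw : w ∈ K) :
    ‖z - w‖ ^ 2 = ‖z - K.starProjection z‖ ^ 2 + ‖K.starProjection z - w‖ ^ 2 := by
  have h := norm_add_sq_eq_norm_sq_add_norm_sq_of_inner_eq_zero (z - K.starProjection z)
    (K.starProjection z - w)
    (K.starProjection_inner_eq_zero z _ (K.sub_mem (K.starProjection_apply_mem z) hw))
  simpa only [sq, sub_add_sub_cancel] using h

theorem norm_sub_starProjection_le (z : E) {w : E} (hw : w ∈ K) :
    ‖z - K.starProjection z‖ ≤ ‖z - w‖ := by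
  refine (pow_le_pow_iff_left₀ (norm_nonneg _) (norm_nonneg _) two_ne_zero).mp ?_
  rw [K.norm_sub_sq_eq_of_mem z hw]
  exact le_add_of_nonneg_right (sq_nonneg _)

theorem tendsto_starProjection_of_tendsto_norm_sub {α : Type*} {l : Filter α} {z : E}
    {u : α → E} (hu : ∀ a, u a ∈ K)
    (h : Tendsto (fun a ↦ ‖z - u a‖) l (𝓝 ‖z - K.starProjection z‖)) :
    Tendsto u l (𝓝 (K.starProjection z)) := by
  have hdist : ∀ a, ‖u a - K.starProjection z‖ =
      √(‖z - u a‖ ^ 2 - ‖z - K.starProjection z‖ ^ 2) := fun a ↦ by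
    rw [K.norm_sub_sq_eq_of_mem z (hu a), add_sub_cancel_left, norm_sub_rev,
      Real.sqrt_sq (norm_nonneg _)]
  rw [tendsto_iff_norm_sub_tendsto_zero, funext hdist]
  have := ((h.pow 2).sub_const (‖z - K.starProjection z‖ ^ 2)).sqrt
  rwa [sub_self, Real.sqrt_zero] at this

end Submodule

theorem stmt8_general {H : Type*} [NormedAddCommGroup H] [InnerProductSpace ℝ H]
    (K : Submodule ℝ H) [FiniteDimensional ℝ K]
    (R : ℕ → H →L[ℝ] H)
    (hlim : ∀ z : H, Tendsto (fun N => R N z) atTop (𝓝 z))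
    [∀ N, Submodule.HasOrthogonalProjection (Submodule.map (R N : H →ₗ[ℝ] H) K)] :
    ∀ z : H, Tendsto (fun N => (Submodule.orthogonalProjectionOnto (Submodule.map (R N : H →ₗ[ℝ] H) K) z : H))
      atTop (𝓝 (Submodule.orthogonalProjectionOnto K z : H)) := by
  intro z
  simp only [Submodule.coe_orthogonalProjectionOnto_apply]
  set M : ℕ → Submodule ℝ H := fun N ↦ K.map (R N : H →ₗ[ℝ] H)
  set w : ℕ → H := fun N ↦ (M N).starProjection z
  set P := K.starProjection z
  have hRK : Tendsto (fun N ↦ (R N).comp K.subtypeL) atTop (𝓝 K.subtypeL) :=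
    tendsto_clm_apply.mpr fun v ↦ hlim v
  have hw_mem : ∀ N, ∃ u : K, R N u = w N := fun N ↦ by
    obtain ⟨y, hy, hyw⟩ := (M N).starProjection_apply_mem z
    exact ⟨⟨y, hy⟩, hyw⟩
  choose u hu using hw_mem
  have hwu : Tendsto (fun N ↦ w N - u N) atTop (𝓝 0) := by
    have := ContinuousLinearMap.tendsto_apply_sub_of_tendsto_of_isometry (fun _ ↦ rfl) hRK
      (x := u) (C := ‖z‖) fun N ↦ by simpa [hu] using (M N).norm_starProjection_apply_le z
    simpa [hu] using this
  have hzu : Tendsto (fun N ↦ ‖z - u N‖) atTop (𝓝 ‖z - P‖) := by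
    refine tendsto_of_tendsto_of_tendsto_of_le_of_le tendsto_const_nhds
      (by simpa using ((tendsto_const_nhds.sub (hlim P)).norm.add hwu.norm))
      (fun N ↦ K.norm_sub_starProjection_le z (u N).2) fun N ↦ ?_
    calc ‖z - u N‖ ≤ ‖z - w N‖ + ‖w N - u N‖ := norm_sub_le_norm_sub_add_norm_sub _ _ _
      _ ≤ ‖z - R N P‖ + ‖w N - u N‖ := by
        gcongr
        exact (M N).norm_sub_starProjection_le z
          (Submodule.mem_map_of_mem (K.starProjection_apply_mem z))
  simpa using (K.tendsto_starProjection_of_tendsto_norm_sub (fun N ↦ (u N).2) hzu).add hwu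

/-- If `K` is a finite-dimensional subspace of a Hilbert space and `(R_N)` are orthogonal
projections converging pointwise to the identity, then the orthogonal projections onto
`R_N(K)` converge pointwise to the orthogonal projection onto `K`. -/
theorem stmt8 {H : Type*} [NormedAddCommGroup H] [InnerProductSpace ℝ H] [CompleteSpace H]
    (K : Submodule ℝ H) [FiniteDimensional ℝ K]
    (R : ℕ → H →L[ℝ] H)
    (hsa : ∀ N, IsSelfAdjoint (R N)) (hidem : ∀ N, (R N) ∘L (R N) = R N)
    (hlim : ∀ z : H, Tendsto (fun N => R N z) atTop (𝓝 z))
    [∀ N, Submodule.HasOrthogonalProjection (Submodule.map (R N : H →ₗ[ℝ] H) K)] :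
    ∀ z : H, Tendsto (fun N => (Submodule.orthogonalProjectionOnto (Submodule.map (R N : H →ₗ[ℝ] H) K) z : H))
      atTop (𝓝 (Submodule.orthogonalProjectionOnto K z : H)) :=
  stmt8_general K R hlim
end

section
/- Let H be a Hilbert space, (Z_N) an increasing sequence of finite-dimensional subspaces with dense union, and L₀ a closed subspace of H of finite codimension. Then for every z ∈ H, the orthogonal projections P_{L₀ ∩ Z_N} z converge to P_{L₀} z as N → ∞. In particular, ⋃_{N≥1}(L₀ ∩ Z_N) is dense in L₀. -/
/-! Let `P` be the orthogonal projection onto the finite-dimensional space `K = L₀ᗮ` and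
`U = ⋃ Z_N`, a dense subspace. `P U` is dense in `K`, hence all of `K`, so `P ∘ U.subtype` has a
continuous right inverse `g`. The continuous map `F = id - g ∘ P` fixes `L₀ = Kᗮ` and sends `U`
into `L₀ ∩ U`, so `L₀ = F L₀ ⊆ F (closure U) ⊆ closure (L₀ ∩ U)`. Convergence of the projections
then holds because the closure of the increasing union of the `L₀ ∩ Z_N` is `L₀`. -/

open Filter Topology

theorem ContinuousLinearMap.range_eq_top_of_denseRange {𝕜 E F : Type*} [NontriviallyNormedField 𝕜]
    [CompleteSpace 𝕜] [NormedAddCommGroup E] [NormedSpace 𝕜 E] [NormedAddCommGroup F]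
    [NormedSpace 𝕜 F] [FiniteDimensional 𝕜 F] (f : E →L[𝕜] F) (hf : DenseRange f) :
    f.range = ⊤ := by
  have hclosed : IsClosed (f.range : Set F) := f.range.closed_of_finiteDimensional
  rw [← SetLike.coe_set_eq, Submodule.top_coe, ← hclosed.closure_eq]
  exact hf.closure_range

namespace Submodule

variable {𝕜 E : Type*} [RCLike 𝕜] [NormedAddCommGroup E] [InnerProductSpace 𝕜 E]

theorem subset_closure_inf_of_dense {L U : Submodule 𝕜 E} [L.HasOrthogonalProjection]
    [FiniteDimensional 𝕜 Lᗮ] (hU : Dense (U : Set E)) :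
    (L : Set E) ⊆ closure (L ⊓ U : Submodule 𝕜 E) := by
  set P := Lᗮ.orthogonalProjectionOnto
  have hP : Function.Surjective P := fun y => ⟨y, orthogonalProjectionOnto_mem_subspace_eq_self y⟩
  obtain ⟨g, hg⟩ := (P.comp U.subtypeL).exists_rightInverse_of_surjective <|
    (P.comp U.subtypeL).range_eq_top_of_denseRange <|
      hP.denseRange.comp hU.denseRange_val P.continuous
  set F : E →L[𝕜] E := .id 𝕜 E - U.subtypeL.comp (g.comp P)
  have hPF (v : E) : P (F v) = 0 := by
    have hPg : P (g (P v)) = P v := congr($hg (P v))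
    simp [F, hPg]
  intro x hx
  have hFx : F x = x := by
    simp [F, P, orthogonalProjectionOnto_apply_of_mem_orthogonal (L.le_orthogonal_orthogonal hx)]
  rw [← hFx]
  refine map_mem_closure F.continuous (hU.closure_eq ▸ Set.mem_univ x) fun v hv => ⟨?_, ?_⟩
  · simpa [orthogonal_orthogonal] using orthogonalProjectionOnto_eq_zero_iff.mp (hPF v)
  · exact U.sub_mem hv (g (P v)).2

theorem subset_closure_iUnion_inf_of_dense {ι : Type*} [Nonempty ι] {L : Submodule 𝕜 E}
    [L.HasOrthogonalProjection] [FiniteDimensional 𝕜 Lᗮ] {Z : ι → Submodule 𝕜 E}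
    (hZ : Directed (· ≤ ·) Z) (hdense : Dense (⋃ i, (Z i : Set E))) :
    (L : Set E) ⊆ closure (⋃ i, (L ⊓ Z i : Submodule 𝕜 E)) := by
  have hU : Dense ((⨆ i, Z i : Submodule 𝕜 E) : Set E) := by
    rwa [coe_iSup_of_directed Z hZ]
  simpa [coe_iSup_of_directed Z hZ, Set.inter_iUnion] using subset_closure_inf_of_dense (L := L) hU

theorem tendsto_starProjection_of_topologicalClosure_iSup_eq {ι : Type*} [Preorder ι]
    {U : ι → Submodule 𝕜 E} [∀ i, (U i).HasOrthogonalProjection] (hU : Monotone U)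
    {K : Submodule 𝕜 E} [K.HasOrthogonalProjection] (hK : (⨆ i, U i).topologicalClosure = K)
    (x : E) : Tendsto (fun i => (U i).starProjection x) atTop (𝓝 (K.starProjection x)) := by
  subst hK
  exact starProjection_tendsto_closure_iSup U hU x

end Submodule

theorem stmt9_general {H : Type*} [NormedAddCommGroup H] [InnerProductSpace ℝ H]
    (Z : ℕ → Submodule ℝ H) (hmono : Monotone Z)
    (hdense : Dense (⋃ N, (Z N : Set H)))
    (L₀ : Submodule ℝ H) (hL₀ : IsClosed (L₀ : Set H)) [CompleteSpace L₀]
    [FiniteDimensional ℝ L₀ᗮ]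
    [∀ N, FiniteDimensional ℝ (L₀ ⊓ Z N : Submodule ℝ H)] :
    (∀ z : H, Tendsto (fun N => (Submodule.orthogonalProjection (L₀ ⊓ Z N) z : H))
        atTop (𝓝 (Submodule.orthogonalProjection L₀ z : H))) ∧
    (L₀ : Set H) ⊆ closure (⋃ N, ((L₀ ⊓ Z N : Submodule ℝ H) : Set H)) := by
  have hsubset := Submodule.subset_closure_iUnion_inf_of_dense (L := L₀) hmono.directed_le hdense
  have hmono_inf : Monotone fun N => L₀ ⊓ Z N := fun _ _ h => inf_le_inf_left L₀ (hmono h)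
  have hclosure : (⨆ N, L₀ ⊓ Z N).topologicalClosure = L₀ := by
    refine le_antisymm
      (Submodule.topologicalClosure_minimal _ (iSup_le fun _ => inf_le_left) hL₀) ?_
    rwa [← SetLike.coe_subset_coe, Submodule.topologicalClosure_coe,
      Submodule.coe_iSup_of_directed _ hmono_inf.directed_le]
  refine ⟨fun z => ?_, hsubset⟩
  simpa only [Submodule.starProjection_apply] using
    Submodule.tendsto_starProjection_of_topologicalClosure_iSup_eq hmono_inf hclosure z

/-- If `(Z_N)` is an increasing sequence of finite-dimensional subspaces of a Hilbert space
with dense union and `L₀` is a closed subspace of finite codimension, then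
`P_{L₀ ∩ Z_N} z → P_{L₀} z` for every `z`; in particular `⋃ (L₀ ∩ Z_N)` is dense in `L₀`. -/
theorem stmt9 {H : Type*} [NormedAddCommGroup H] [InnerProductSpace ℝ H] [CompleteSpace H]
    (Z : ℕ → Submodule ℝ H) (hmono : Monotone Z) [∀ N, FiniteDimensional ℝ (Z N)]
    (hdense : Dense (⋃ N, (Z N : Set H)))
    (L₀ : Submodule ℝ H) (hL₀ : IsClosed (L₀ : Set H)) [CompleteSpace L₀]
    [FiniteDimensional ℝ L₀ᗮ]
    [∀ N, FiniteDimensional ℝ (L₀ ⊓ Z N : Submodule ℝ H)] :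
    (∀ z : H, Tendsto (fun N => (Submodule.orthogonalProjection (L₀ ⊓ Z N) z : H))
        atTop (𝓝 (Submodule.orthogonalProjection L₀ z : H))) ∧
    (L₀ : Set H) ⊆ closure (⋃ N, ((L₀ ⊓ Z N : Submodule ℝ H) : Set H)) :=
  stmt9_general Z hmono hdense L₀ hL₀
end

section
/- Let H be a Hilbert space with increasing finite-dimensional subspaces Z_N having dense union, and let L : H → X and Q : H → W be continuous linear surjections onto finite-dimensional Hilbert spaces such that ker L + ker Q = H. Writing L_N = L|Z_N and Q_N = Q|Z_N, then for all sufficiently large N: Q_N(ker L_N) = W and ker L_N + ker Q_N = Z_N. -/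
/-!
Since `ker L + ker Q = H`, the map `T = (L, Q) : H → X × W` is onto. The span of the images
`T(Z_N)` is finite-dimensional, hence closed, and dense because `T` is continuous and `⋃ Z_N` is
dense; so it is all of `X × W`, and by Noetherianity `T(Z_N) = X × W` for all large `N`. Then every
`(0, w)` is hit from `Z_N`, i.e. `Q(Z_N ∩ ker L) = W`, and for `z ∈ Z_N` a `u ∈ Z_N ∩ ker L` with
`Q u = Q z` splits `z = u + (z - u)` along `ker L_N + ker Q_N`.
-/

theorem WellFoundedGT.exists_forall_ge_eq_iSup {α : Type*} [CompleteLattice α] [WellFoundedGT α]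
    {a : ℕ → α} (ha : Monotone a) : ∃ n₀, ∀ n ≥ n₀, a n = ⨆ m, a m := by
  obtain ⟨n₀, hn₀⟩ := WellFoundedGT.monotone_chain_condition ⟨a, ha⟩
  have hsup : ⨆ m, a m = a n₀ :=
    (iSup_le fun m => (ha (le_max_left m n₀)).trans (hn₀ _ (le_max_right m n₀)).ge).antisymm
      (le_iSup a n₀)
  exact ⟨n₀, fun n hn => hsup ▸ (hn₀ n hn).symm⟩

theorem Submodule.iSup_map_eq_top_of_dense {𝕜 E V ι : Type*} [NontriviallyNormedField 𝕜]
    [CompleteSpace 𝕜] [AddCommGroup E] [TopologicalSpace E] [Module 𝕜 E]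
    [AddCommGroup V] [TopologicalSpace V] [IsTopologicalAddGroup V] [Module 𝕜 V]
    [ContinuousSMul 𝕜 V] [T2Space V] [FiniteDimensional 𝕜 V]
    {Z : ι → Submodule 𝕜 E} (hZ : Dense (⋃ i, (Z i : Set E)))
    {T : E →L[𝕜] V} (hT : DenseRange T) : ⨆ i, (Z i).map (T : E →ₗ[𝕜] V) = ⊤ := by
  set S := ⨆ i, (Z i).map (T : E →ₗ[𝕜] V)
  have himage : Set.range (T ∘ ((↑) : (⋃ i, (Z i : Set E)) → E)) ⊆ S := by
    rintro _ ⟨⟨x, hx⟩, rfl⟩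
    obtain ⟨i, hi⟩ := Set.mem_iUnion.mp hx
    exact le_iSup (fun i => (Z i).map (T : E →ₗ[𝕜] V)) i ⟨x, hi, rfl⟩
  have hS : Dense (S : Set V) := (hT.comp hZ.denseRange_val T.continuous).mono himage
  rw [← Submodule.coe_eq_univ, ← hS.closure_eq, S.closed_of_finiteDimensional.closure_eq]

theorem LinearMap.surjective_prod {R M N P : Type*} [Ring R] [AddCommGroup M] [AddCommGroup N]
    [AddCommGroup P] [Module R M] [Module R N] [Module R P] {f : M →ₗ[R] N} {g : M →ₗ[R] P}
    (hf : Function.Surjective f) (hg : Function.Surjective g) (h : ker f ⊔ ker g = ⊤) :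
    Function.Surjective (f.prod g) := by
  rw [← range_eq_top, range_prod_eq h, range_eq_top.mpr hf, range_eq_top.mpr hg,
    Submodule.prod_top]

section

variable {R M N P : Type*} [Ring R] [AddCommGroup M] [AddCommGroup N] [AddCommGroup P]
    [Module R M] [Module R N] [Module R P] {f : M →ₗ[R] N} {g : M →ₗ[R] P}
    {Z : Submodule R M}

theorem Submodule.map_inf_ker_eq_top_of_map_prod_eq_top (hZ : Z.map (f.prod g) = ⊤) :
    (Z ⊓ LinearMap.ker f).map g = ⊤ := by
  refine eq_top_iff.mpr fun w _ => ?_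
  obtain ⟨z, hz, hfg⟩ : ((0 : N), w) ∈ Z.map (f.prod g) := hZ ▸ Submodule.mem_top
  exact ⟨z, ⟨hz, congrArg Prod.fst hfg⟩, congrArg Prod.snd hfg⟩

theorem Submodule.inf_sup_inf_ker_eq_of_map_le {K : Submodule R M}
    (h : Z.map g ≤ (Z ⊓ K).map g) : Z ⊓ K ⊔ Z ⊓ LinearMap.ker g = Z := by
  rw [inf_comm Z (LinearMap.ker g), ← sup_inf_assoc_of_le _ inf_le_left, inf_eq_right]
  exact (LinearMap.map_le_map_iff g).mp h
end

theorem stmt11_general {H X W : Type*} [NormedAddCommGroup H] [InnerProductSpace ℝ H]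
    [NormedAddCommGroup X] [InnerProductSpace ℝ X] [FiniteDimensional ℝ X]
    [NormedAddCommGroup W] [InnerProductSpace ℝ W] [FiniteDimensional ℝ W]
    (Z : ℕ → Submodule ℝ H) (hmono : Monotone Z)
    (hdense : Dense (⋃ N, (Z N : Set H)))
    (L : H →L[ℝ] X) (Q : H →L[ℝ] W)
    (hL : Function.Surjective L) (hQ : Function.Surjective Q)
    (hsum : LinearMap.ker (L : H →ₗ[ℝ] X) ⊔ LinearMap.ker (Q : H →ₗ[ℝ] W) = ⊤) :
    ∃ N₀, ∀ N ≥ N₀,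
      Submodule.map (Q : H →ₗ[ℝ] W) (Z N ⊓ LinearMap.ker (L : H →ₗ[ℝ] X)) = ⊤ ∧
      (Z N ⊓ LinearMap.ker (L : H →ₗ[ℝ] X)) ⊔ (Z N ⊓ LinearMap.ker (Q : H →ₗ[ℝ] W)) = Z N := by
  have hLQ : Function.Surjective (L.prod Q) := LinearMap.surjective_prod hL hQ hsum
  have hsup := Submodule.iSup_map_eq_top_of_dense hdense hLQ.denseRange
  obtain ⟨N₀, hN₀⟩ := WellFoundedGT.exists_forall_ge_eq_iSup
    (a := fun N => (Z N).map ((L.prod Q : H →L[ℝ] X × W) : H →ₗ[ℝ] X × W))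
    fun _ _ h => Submodule.map_mono (hmono h)
  refine ⟨N₀, fun N hN => ?_⟩
  have hmapQ := Submodule.map_inf_ker_eq_top_of_map_prod_eq_top ((hN₀ N hN).trans hsup)
  exact ⟨hmapQ, Submodule.inf_sup_inf_ker_eq_of_map_le (hmapQ ▸ le_top)⟩

/-- If `L : H → X` and `Q : H → W` are continuous linear surjections onto finite-dimensional
Hilbert spaces with `ker L + ker Q = H`, and `(Z_N)` are increasing finite-dimensional
subspaces with dense union, then for large `N`: `Q_N(ker L_N) = W` and
`ker L_N + ker Q_N = Z_N` (kernels of the restrictions being `Z_N ∩ ker L`, `Z_N ∩ ker Q`). -/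
theorem stmt11 {H X W : Type*} [NormedAddCommGroup H] [InnerProductSpace ℝ H] [CompleteSpace H]
    [NormedAddCommGroup X] [InnerProductSpace ℝ X] [FiniteDimensional ℝ X]
    [NormedAddCommGroup W] [InnerProductSpace ℝ W] [FiniteDimensional ℝ W]
    (Z : ℕ → Submodule ℝ H) (hmono : Monotone Z) [∀ N, FiniteDimensional ℝ (Z N)]
    (hdense : Dense (⋃ N, (Z N : Set H)))
    (L : H →L[ℝ] X) (Q : H →L[ℝ] W)
    (hL : Function.Surjective L) (hQ : Function.Surjective Q)
    (hsum : LinearMap.ker (L : H →ₗ[ℝ] X) ⊔ LinearMap.ker (Q : H →ₗ[ℝ] W) = ⊤) :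
    ∃ N₀, ∀ N ≥ N₀,
      Submodule.map (Q : H →ₗ[ℝ] W) (Z N ⊓ LinearMap.ker (L : H →ₗ[ℝ] X)) = ⊤ ∧
      (Z N ⊓ LinearMap.ker (L : H →ₗ[ℝ] X)) ⊔ (Z N ⊓ LinearMap.ker (Q : H →ₗ[ℝ] W)) = Z N :=
  stmt11_general Z hmono hdense L Q hL hQ hsum
end

section
/- Let H, W, X be Hilbert spaces, Q : H → W and L : H → X continuous linear maps. Let L₀ be the restriction of L to the subspace ker Q ⊖ ker L (the orthogonal complement of ker Q ∩ ker L within ker Q), viewed as a map into X. Then L₀ L₀* = L P_{ker Q} L*, where P_{ker Q} is the orthogonal projection of H onto ker Q. -/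
/-!
With `T = ker Q ∩ ker L ≤ ker Q`, the space `S = ker Q ⊖ ker L` is the orthogonal complement of
`T` inside `ker Q`, so `P_{ker Q} = P_T + P_S`; as `L` vanishes on `T`, `L P_{ker Q} = L P_S`.
Finally the adjoint of the inclusion `ι_S : S → H` is the orthogonal projection onto `S`, so
`(L ι_S)(L ι_S)* = L P_S L*`.
-/

open ContinuousLinearMap

section

variable {𝕜 E F : Type*} [RCLike 𝕜]
  [NormedAddCommGroup E] [InnerProductSpace 𝕜 E] [NormedAddCommGroup F] [InnerProductSpace 𝕜 F]

namespace Submodule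

theorem starProjection_eq_add_starProjection_inf_orthogonal {T K : Submodule 𝕜 E}
    [T.HasOrthogonalProjection] [K.HasOrthogonalProjection] [(K ⊓ Tᗮ).HasOrthogonalProjection]
    (h : T ≤ K) (x : E) :
    K.starProjection x = T.starProjection x + (K ⊓ Tᗮ).starProjection x := by
  set S := K ⊓ Tᗮ
  set y := K.starProjection x
  have hT : T.starProjection y = T.starProjection x :=
    congr($(starProjection_comp_starProjection_of_le h) x)
  have hS : S.starProjection y = S.starProjection x :=
    congr($(starProjection_comp_starProjection_of_le inf_le_left) x)
  have hTS : T.starProjection y ∈ Sᗮ :=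
    orthogonal_le inf_le_right (T.le_orthogonal_orthogonal (T.starProjection_apply_mem y))
  have hcompl : y - T.starProjection y ∈ S :=
    ⟨K.sub_mem (K.starProjection_apply_mem x) (h (T.starProjection_apply_mem y)),
      T.sub_starProjection_mem_orthogonal y⟩
  symm
  calc T.starProjection x + S.starProjection x
      = T.starProjection y + (S.starProjection (T.starProjection y) +
          S.starProjection (y - T.starProjection y)) := by
        rw [← map_add, add_sub_cancel, hT, hS]
    _ = y := by
        rw [(S.starProjection_apply_eq_zero_iff).mpr hTS, starProjection_eq_self_iff.mpr hcompl,
          zero_add, add_sub_cancel]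

end Submodule

namespace ContinuousLinearMap

theorem comp_starProjection_inf_orthogonal_ker (L : E →L[𝕜] F) (K : Submodule 𝕜 E)
    [K.HasOrthogonalProjection] [(K ⊓ LinearMap.ker (L : E →ₗ[𝕜] F)).HasOrthogonalProjection]
    [(K ⊓ (K ⊓ LinearMap.ker (L : E →ₗ[𝕜] F))ᗮ).HasOrthogonalProjection] :
    L ∘L (K ⊓ (K ⊓ LinearMap.ker (L : E →ₗ[𝕜] F))ᗮ).starProjection = L ∘L K.starProjection := by
  ext x
  have hker : L ((K ⊓ LinearMap.ker (L : E →ₗ[𝕜] F)).starProjection x) = 0 :=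
    ((K ⊓ LinearMap.ker (L : E →ₗ[𝕜] F)).starProjection_apply_mem x).2
  rw [comp_apply, comp_apply,
    Submodule.starProjection_eq_add_starProjection_inf_orthogonal
      (T := K ⊓ LinearMap.ker (L : E →ₗ[𝕜] F)) inf_le_left x,
    map_add, hker, zero_add]

theorem comp_subtypeL_comp_adjoint_comp_subtypeL [CompleteSpace E] [CompleteSpace F]
    (L : E →L[𝕜] F) (S : Submodule 𝕜 E) [CompleteSpace S] :
    (L ∘L S.subtypeL) ∘L adjoint (L ∘L S.subtypeL) = L ∘L S.starProjection ∘L adjoint L := by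
  rw [adjoint_comp, S.adjoint_subtypeL]
  rfl

end ContinuousLinearMap

end

theorem stmt12_general {H W X : Type*}
    [NormedAddCommGroup H] [InnerProductSpace ℝ H] [CompleteSpace H]
    [NormedAddCommGroup W] [InnerProductSpace ℝ W]
    [NormedAddCommGroup X] [InnerProductSpace ℝ X] [CompleteSpace X]
    (Q : H →L[ℝ] W) (L : H →L[ℝ] X)
    (S : Submodule ℝ H)
    (hS : S = LinearMap.ker (Q : H →ₗ[ℝ] W) ⊓
      (LinearMap.ker (Q : H →ₗ[ℝ] W) ⊓ LinearMap.ker (L : H →ₗ[ℝ] X))ᗮ)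
    [CompleteSpace S] [CompleteSpace (LinearMap.ker (Q : H →ₗ[ℝ] W))] :
    (L.comp S.subtypeL) ∘L (ContinuousLinearMap.adjoint (L.comp S.subtypeL)) =
      L ∘L ((LinearMap.ker (Q : H →ₗ[ℝ] W)).subtypeL ∘L
        Submodule.orthogonalProjectionOnto (LinearMap.ker (Q : H →ₗ[ℝ] W))) ∘L
        ContinuousLinearMap.adjoint L := by
  subst hS
  have : CompleteSpace
      ((LinearMap.ker (Q : H →ₗ[ℝ] W) ⊓ LinearMap.ker (L : H →ₗ[ℝ] X) : Submodule ℝ H)) :=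
    (Q.isClosed_ker.inter L.isClosed_ker).completeSpace_coe
  rw [L.comp_subtypeL_comp_adjoint_comp_subtypeL, ← comp_assoc,
    L.comp_starProjection_inf_orthogonal_ker]
  rfl

/-- For continuous linear maps `Q : H → W`, `L : H → X` between Hilbert spaces, with
`L₀` the restriction of `L` to `ker Q ⊖ ker L` (the orthogonal complement of
`ker Q ∩ ker L` within `ker Q`), one has `L₀ L₀* = L P_{ker Q} L*`. -/
theorem stmt12 {H W X : Type*}
    [NormedAddCommGroup H] [InnerProductSpace ℝ H] [CompleteSpace H]
    [NormedAddCommGroup W] [InnerProductSpace ℝ W] [CompleteSpace W]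
    [NormedAddCommGroup X] [InnerProductSpace ℝ X] [CompleteSpace X]
    (Q : H →L[ℝ] W) (L : H →L[ℝ] X)
    (S : Submodule ℝ H)
    (hS : S = LinearMap.ker (Q : H →ₗ[ℝ] W) ⊓
      (LinearMap.ker (Q : H →ₗ[ℝ] W) ⊓ LinearMap.ker (L : H →ₗ[ℝ] X))ᗮ)
    [CompleteSpace S] [CompleteSpace (LinearMap.ker (Q : H →ₗ[ℝ] W))] :
    (L.comp S.subtypeL) ∘L (ContinuousLinearMap.adjoint (L.comp S.subtypeL)) =
      L ∘L ((LinearMap.ker (Q : H →ₗ[ℝ] W)).subtypeL ∘L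
        Submodule.orthogonalProjectionOnto (LinearMap.ker (Q : H →ₗ[ℝ] W))) ∘L
        ContinuousLinearMap.adjoint L :=
  stmt12_general Q L S hS
end

section
/- Let H be a Hilbert space, Q : H → W a continuous linear surjection onto a finite-dimensional inner-product space, and Z₁ ⊆ Z₂ ⊆ ⋯ finite-dimensional subspaces of H whose union is dense. Let z^{0,N} be the point of Z_N ∩ Q⁻¹(w⁰) closest to 0 (defined for large N) and z⁰ the point of Q⁻¹(w⁰) closest to 0. Then z^{0,N} converges weakly to z⁰; consequently, for any continuous linear map 𝓛 : H → X into a finite-dimensional space X, 𝓛 z^{0,N} → 𝓛 z⁰ as N → ∞. -/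
/-!
A minimiser `z⁰` of the norm on the fibre `Q⁻¹(w⁰)` is orthogonal to `ker Q`, so every `z` in
the fibre satisfies `‖z‖² = ‖z⁰‖² + ‖z - z⁰‖²`. The image under `Q` of the dense union of the
`Z_N` is a dense, hence closed, subspace of the finite-dimensional `W`, so some `Z_M` is already
mapped onto `W`. Correcting the orthogonal projections of `z⁰` onto `Z_N` by a fixed right
inverse of `Q` with values in `Z_M` gives points `c_N ∈ Z_N ∩ Q⁻¹(w⁰)` with `c_N → z⁰`, and
minimality of `z^{0,N}` yields `‖z^{0,N} - z⁰‖² ≤ ‖c_N‖² - ‖z⁰‖² → 0`: the convergence is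
even strong.
-/

open Filter Topology RealInnerProductSpace

namespace LinearMap

variable {E F : Type*} [NormedAddCommGroup E] [InnerProductSpace ℝ E] [AddCommGroup F] [Module ℝ F]
  {Q : E →ₗ[ℝ] F} {x : E}

theorem inner_eq_zero_of_forall_norm_le (hx : ∀ z, Q z = Q x → ‖x‖ ≤ ‖z‖) {u : E} (hu : Q u = 0) :
    ⟪x, u⟫ = 0 := by
  have hinf : ‖x - 0‖ = ⨅ w : (ker Q : Set E), ‖x - w‖ := by
    rw [sub_zero]
    refine le_antisymm (le_ciInf fun w => hx _ ?_) ?_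
    · simp [show Q w = 0 from w.2]
    · exact (ciInf_le ⟨0, Set.forall_mem_range.2 fun _ => norm_nonneg _⟩ ⟨0, zero_mem _⟩).trans
        (by simp)
  simpa using (Submodule.norm_eq_iInf_iff_real_inner_eq_zero (ker Q) (zero_mem _)).1 hinf u hu

theorem norm_sq_eq_of_forall_norm_le (hx : ∀ z, Q z = Q x → ‖x‖ ≤ ‖z‖) {z : E} (hz : Q z = Q x) :
    ‖z‖ ^ 2 = ‖x‖ ^ 2 + ‖z - x‖ ^ 2 := by
  have h := norm_add_sq_real x (z - x)
  rw [inner_eq_zero_of_forall_norm_le hx (by simp [hz]), add_sub_cancel] at h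
  linarith

theorem tendsto_of_forall_norm_le {ι : Type*} {l : Filter ι} (hx : ∀ z, Q z = Q x → ‖x‖ ≤ ‖z‖)
    {y c : ι → E} (hy : ∀ᶠ n in l, Q (y n) = Q x ∧ ‖y n‖ ≤ ‖c n‖) (hc : Tendsto c l (𝓝 x)) :
    Tendsto y l (𝓝 x) := by
  rw [tendsto_iff_norm_sub_tendsto_zero]
  have hrhs : Tendsto (fun n => √(‖c n‖ ^ 2 - ‖x‖ ^ 2)) l (𝓝 0) := by
    have := ((hc.norm.pow 2).sub_const (‖x‖ ^ 2)).sqrt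
    rwa [sub_self, Real.sqrt_zero] at this
  refine squeeze_zero' (.of_forall fun _ => norm_nonneg _) ?_ hrhs
  filter_upwards [hy] with n ⟨hQ, hle⟩
  refine Real.le_sqrt_of_sq_le ?_
  have := norm_sq_eq_of_forall_norm_le hx hQ
  nlinarith [norm_nonneg (y n)]

end LinearMap

namespace ContinuousLinearMap

theorem exists_map_eq_top_of_dense_iUnion {E F : Type*} [NormedAddCommGroup E] [NormedSpace ℝ E]
    [NormedAddCommGroup F] [NormedSpace ℝ F] [FiniteDimensional ℝ F] {Q : E →L[ℝ] F}
    (hQ : Function.Surjective Q) {Z : ℕ → Submodule ℝ E} (hmono : Monotone Z)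
    (hdense : Dense (⋃ N, (Z N : Set E))) : ∃ M, (Z M).map (Q : E →ₗ[ℝ] F) = ⊤ := by
  have hsup : (⨆ N, Z N).map (Q : E →ₗ[ℝ] F) = ⊤ := by
    have hd : Dense ((⨆ N, Z N).map (Q : E →ₗ[ℝ] F) : Set F) := by
      rw [Submodule.map_coe, Submodule.coe_iSup_of_directed Z hmono.directed_le]
      exact hQ.denseRange.dense_image Q.continuous hdense
    rw [← SetLike.coe_set_eq, Submodule.top_coe, ← hd.closure_eq,
      (Submodule.closed_of_finiteDimensional _).closure_eq]
  obtain ⟨M, hM⟩ := monotone_stabilizes_iff_noetherian.mpr inferInstance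
    ⟨fun N => (Z N).map (Q : E →ₗ[ℝ] F), fun _ _ h => Submodule.map_mono (hmono h)⟩
  refine ⟨M, top_le_iff.1 ?_⟩
  rw [← hsup, Submodule.map_iSup]
  refine iSup_le fun N => ?_
  rcases le_total N M with h | h
  · exact Submodule.map_mono (hmono h)
  · exact (hM N h).ge

theorem exists_tendsto_of_dense_iUnion {E F : Type*} [NormedAddCommGroup E]
    [InnerProductSpace ℝ E] [NormedAddCommGroup F] [NormedSpace ℝ F] [FiniteDimensional ℝ F]
    {Q : E →L[ℝ] F} (hQ : Function.Surjective Q) {Z : ℕ → Submodule ℝ E} (hmono : Monotone Z)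
    [∀ N, (Z N).HasOrthogonalProjection] (hdense : Dense (⋃ N, (Z N : Set E))) (x : E) :
    ∃ c : ℕ → E, (∀ᶠ N in atTop, c N ∈ Z N ∧ Q (c N) = Q x) ∧ Tendsto c atTop (𝓝 x) := by
  obtain ⟨M, hM⟩ := exists_map_eq_top_of_dense_iUnion hQ hmono hdense
  obtain ⟨S, hS⟩ := ((Q : E →ₗ[ℝ] F) ∘ₗ (Z M).subtype).exists_rightInverse_of_surjective
    (by rw [LinearMap.range_comp, Submodule.range_subtype, hM])
  have hQS (w : F) : Q (S w) = w := LinearMap.congr_fun hS w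
  have hp : Tendsto (fun N => (Z N).starProjection x) atTop (𝓝 x) := by
    refine Submodule.starProjection_tendsto_self Z hmono x
      (Submodule.dense_iff_topologicalClosure_eq_top.1 ?_).ge
    rwa [Submodule.coe_iSup_of_directed Z hmono.directed_le]
  refine ⟨fun N => (Z N).starProjection x + S (Q x - Q ((Z N).starProjection x)),
    eventually_atTop.2 ⟨M, fun N hN => ⟨add_mem (Submodule.coe_mem _) (hmono hN (S _).2), ?_⟩⟩, ?_⟩
  · simp [hQS]
  · have hSc : Continuous fun w => (S w : E) :=
      continuous_subtype_val.comp (LinearMap.continuous_of_finiteDimensional S)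
    simpa using hp.add ((hSc.tendsto _).comp
      ((tendsto_const_nhds (x := Q x)).sub ((Q.continuous.tendsto x).comp hp)))

end ContinuousLinearMap

theorem stmt14_general {H W : Type*}
    [NormedAddCommGroup H] [InnerProductSpace ℝ H]
    [NormedAddCommGroup W] [InnerProductSpace ℝ W] [FiniteDimensional ℝ W]
    (Q : H →L[ℝ] W) (hQ : Function.Surjective Q) (w0 : W)
    (Z : ℕ → Submodule ℝ H) (hmono : Monotone Z) [∀ N, FiniteDimensional ℝ (Z N)]
    (hdense : Dense (⋃ N, (Z N : Set H)))
    (z0N : ℕ → H)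
    (hz0N : ∀ᶠ N in atTop, z0N N ∈ Z N ∧ Q (z0N N) = w0 ∧
      ∀ z ∈ Z N, Q z = w0 → ‖z0N N‖ ≤ ‖z‖)
    (z0 : H) (hz0 : Q z0 = w0 ∧ ∀ z : H, Q z = w0 → ‖z0‖ ≤ ‖z‖) :
    (∀ y : H, Tendsto (fun N => ⟪z0N N, y⟫) atTop (𝓝 ⟪z0, y⟫)) ∧
    (∀ (X : Type) [NormedAddCommGroup X] [InnerProductSpace ℝ X] [FiniteDimensional ℝ X]
        (𝓛 : H →L[ℝ] X),
      Tendsto (fun N => 𝓛 (z0N N)) atTop (𝓝 (𝓛 z0))) := by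
  obtain ⟨hQz0, hz0_min⟩ := hz0
  obtain ⟨c, hc_feasible, hc⟩ :=
    ContinuousLinearMap.exists_tendsto_of_dense_iUnion hQ hmono hdense z0
  have hstrong : Tendsto z0N atTop (𝓝 z0) := by
    refine LinearMap.tendsto_of_forall_norm_le (Q := (Q : H →ₗ[ℝ] W))
      (fun z hz => hz0_min z (hz.trans hQz0)) ?_ hc
    filter_upwards [hz0N, hc_feasible] with N ⟨_, hQN, hminN⟩ ⟨hcZ, hcQ⟩
    exact ⟨hQN.trans hQz0.symm, hminN _ hcZ (hcQ.trans hQz0)⟩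
  exact ⟨fun y => hstrong.inner tendsto_const_nhds,
    fun X _ _ _ 𝓛 => (𝓛.continuous.tendsto z0).comp hstrong⟩

/-- If `z^{0,N}` is the closest point to the origin of `Z_N ∩ Q⁻¹(w⁰)` (for large `N`)
and `z⁰` the closest point of `Q⁻¹(w⁰)`, then `z^{0,N} → z⁰` weakly; consequently
`𝓛 z^{0,N} → 𝓛 z⁰` for any continuous linear map `𝓛` into a finite-dimensional space. -/
theorem stmt14 {H W : Type*}
    [NormedAddCommGroup H] [InnerProductSpace ℝ H] [CompleteSpace H]
    [NormedAddCommGroup W] [InnerProductSpace ℝ W] [FiniteDimensional ℝ W]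
    (Q : H →L[ℝ] W) (hQ : Function.Surjective Q) (w0 : W)
    (Z : ℕ → Submodule ℝ H) (hmono : Monotone Z) [∀ N, FiniteDimensional ℝ (Z N)]
    (hdense : Dense (⋃ N, (Z N : Set H)))
    (z0N : ℕ → H)
    (hz0N : ∀ᶠ N in atTop, z0N N ∈ Z N ∧ Q (z0N N) = w0 ∧
      ∀ z ∈ Z N, Q z = w0 → ‖z0N N‖ ≤ ‖z‖)
    (z0 : H) (hz0 : Q z0 = w0 ∧ ∀ z : H, Q z = w0 → ‖z0‖ ≤ ‖z‖) :
    (∀ y : H, Tendsto (fun N => ⟪z0N N, y⟫) atTop (𝓝 ⟪z0, y⟫)) ∧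
    (∀ (X : Type) [NormedAddCommGroup X] [InnerProductSpace ℝ X] [FiniteDimensional ℝ X]
        (𝓛 : H →L[ℝ] X),
      Tendsto (fun N => 𝓛 (z0N N)) atTop (𝓝 (𝓛 z0))) :=
  stmt14_general Q hQ w0 Z hmono hdense z0N hz0N z0 hz0
end
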